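/- Let λ > 0 and 0 < t. For every measurable function g : [0,t] × ℝ → ℝ one has ∫_ℝ (∫_0^t ∫_ℝ p_{t-s}(x,y) g(s,y) dy ds)² e^{-2λ|x|} dx ≤ 2 t e^{2λ² t} ∫_0^t ∫_ℝ g(s,y)² e^{-2λ|y|} dy ds (the inequality being trivially true when the right-hand side is infinite). -/

import Mathlib

open MeasureTheory Real

/-- The one-dimensional heat kernel `p_t(x,y) = (2πt)^{-1/2} exp(-(x-y)²/(2t))`. -/
noncomputable def heatKernel (t x y : ℝ) : ℝ :=
  (Real.sqrt (2 * Real.pi * t))⁻¹ * Real.exp (-(x - y) ^ 2 / (2 * t))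

set_option maxHeartbeats 1000000

lemma heatKernel_nonneg (τ x y : ℝ) : 0 ≤ heatKernel τ x y :=
  mul_nonneg (inv_nonneg.2 (Real.sqrt_nonneg _)) (Real.exp_pos _).le

lemma heatKernel_of_nonpos {τ : ℝ} (hτ : τ ≤ 0) (x y : ℝ) : heatKernel τ x y = 0 := by
  have h2 : 2 * Real.pi * τ ≤ 0 :=
    mul_nonpos_of_nonneg_of_nonpos (by positivity) hτ
  have : Real.sqrt (2 * Real.pi * τ) = 0 := Real.sqrt_eq_zero'.2 h2
  simp [heatKernel, this]

lemma heatKernel_symm (τ x y : ℝ) : heatKernel τ x y = heatKernel τ y x := by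
  have : (x - y) ^ 2 = (y - x) ^ 2 := by ring
  rw [heatKernel, heatKernel, this]

lemma measurable_heatKernel : Measurable fun p : ℝ × ℝ × ℝ => heatKernel p.1 p.2.1 p.2.2 := by
  unfold heatKernel
  fun_prop

lemma lintegral_heatKernel_mul_exp {τ : ℝ} (hτ : 0 < τ) (c y : ℝ) :
    ∫⁻ x, ENNReal.ofReal (heatKernel τ x y * Real.exp (c * (x - y))) =
      ENNReal.ofReal (Real.exp (c ^ 2 * τ / 2)) := by
  have hb : (0:ℝ) < 1 / (2 * τ) := by positivity
  have hs : 0 < Real.sqrt (2 * Real.pi * τ) := Real.sqrt_pos.2 (by positivity)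
  set k : ℝ := (Real.sqrt (2 * Real.pi * τ))⁻¹ * Real.exp (c ^ 2 * τ / 2) with hk
  have key : ∀ x, heatKernel τ x y * Real.exp (c * (x - y)) =
      k * Real.exp (-(1 / (2 * τ)) * (x - (y + c * τ)) ^ 2) := by
    intro x
    have harg : -(x - y) ^ 2 / (2 * τ) + c * (x - y) =
        c ^ 2 * τ / 2 + -(1 / (2 * τ)) * (x - (y + c * τ)) ^ 2 := by
      field_simp
      ring
    rw [heatKernel, hk, mul_assoc, ← Real.exp_add, harg, Real.exp_add, ← mul_assoc]
  have hint : Integrable fun x : ℝ => Real.exp (-(1 / (2 * τ)) * (x - (y + c * τ)) ^ 2) :=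
    (integrable_exp_neg_mul_sq hb).comp_sub_right _
  have hval : ∫ x : ℝ, Real.exp (-(1 / (2 * τ)) * (x - (y + c * τ)) ^ 2) =
      Real.sqrt (2 * Real.pi * τ) := by
    rw [integral_sub_right_eq_self (μ := volume)
      (fun z => Real.exp (-(1 / (2 * τ)) * z ^ 2)) (y + c * τ), integral_gaussian]
    congr 1
    field_simp
  simp_rw [key]
  rw [← ofReal_integral_eq_lintegral_ofReal (hint.const_mul k)
      (Filter.Eventually.of_forall fun x => by positivity),
    integral_const_mul, hval, hk]
  congr 1
  field_simp

lemma lintegral_heatKernel_fst_le_one (τ y : ℝ) :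
    ∫⁻ x, ENNReal.ofReal (heatKernel τ x y) ≤ 1 := by
  rcases le_or_gt τ 0 with h | h
  · simp [heatKernel_of_nonpos h]
  · have h1 : ∫⁻ x, ENNReal.ofReal (heatKernel τ x y) =
        ENNReal.ofReal (Real.exp ((0:ℝ) ^ 2 * τ / 2)) := by
      rw [← lintegral_heatKernel_mul_exp h 0 y]
      simp
    rw [h1]
    norm_num

lemma lintegral_heatKernel_snd_le_one (τ x : ℝ) :
    ∫⁻ y, ENNReal.ofReal (heatKernel τ x y) ≤ 1 := by
  simp_rw [heatKernel_symm τ x]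
  exact lintegral_heatKernel_fst_le_one τ x

open scoped ENNReal

lemma measurable_heatKernel_x (τ y : ℝ) : Measurable fun x : ℝ => heatKernel τ x y := by
  change Measurable ((fun p : ℝ × ℝ × ℝ => heatKernel p.1 p.2.1 p.2.2) ∘ fun x => (τ, x, y))
  exact measurable_heatKernel.comp (by fun_prop)
lemma lintegral_cauchy_schwarz {α : Type*} [MeasurableSpace α] (μ : Measure α)
    {f g : α → ℝ≥0∞} (hf : AEMeasurable f μ) (hg : AEMeasurable g μ) :
    (∫⁻ a, f a * g a ∂μ) ^ 2 ≤ (∫⁻ a, f a ∂μ) * ∫⁻ a, f a * g a ^ 2 ∂μ := by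
  have hconj : Real.HolderConjugate 2 2 := Real.HolderConjugate.two_two
  have hhalf : ∀ x : ℝ≥0∞, x ^ (1/2 : ℝ) * x ^ (1/2 : ℝ) = x := by
    intro x
    rw [← ENNReal.rpow_add_of_nonneg _ _ (by norm_num) (by norm_num)]
    norm_num
  have hh2 : ∀ x : ℝ≥0∞, (x ^ (1/2 : ℝ)) ^ (2 : ℝ) = x := by
    intro x
    rw [← ENNReal.rpow_mul]
    norm_num
  have hh2' : ∀ x : ℝ≥0∞, (x ^ (1/2 : ℝ)) ^ (2 : ℕ) = x := by
    intro x
    rw [← ENNReal.rpow_natCast (x ^ (1/2 : ℝ)) 2]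
    rw [show ((2:ℕ):ℝ) = (2:ℝ) by norm_num]
    exact hh2 x
  have hg2 : ∀ x : ℝ≥0∞, x ^ (2:ℝ) = x ^ (2:ℕ) := by
    intro x
    rw [← ENNReal.rpow_natCast x 2, show ((2:ℕ):ℝ) = (2:ℝ) by norm_num]
  have hf' : AEMeasurable (fun a => f a ^ (1/2 : ℝ)) μ := hf.pow_const _
  have hg' : AEMeasurable (fun a => f a ^ (1/2 : ℝ) * g a) μ := hf'.mul hg
  have hcs := ENNReal.lintegral_mul_le_Lp_mul_Lq μ hconj hf' hg'
  calc (∫⁻ a, f a * g a ∂μ) ^ 2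
      = (∫⁻ a, ((fun a => f a ^ (1/2:ℝ)) * fun a => f a ^ (1/2:ℝ) * g a) a ∂μ) ^ 2 := by
        congr 1
        refine lintegral_congr fun a => ?_
        simp only [Pi.mul_apply]
        rw [← mul_assoc, hhalf]
    _ ≤ ((∫⁻ a, (f a ^ (1/2:ℝ)) ^ (2:ℝ) ∂μ) ^ (1/2:ℝ) *
          (∫⁻ a, (f a ^ (1/2:ℝ) * g a) ^ (2:ℝ) ∂μ) ^ (1/2:ℝ)) ^ 2 :=
        pow_le_pow_left₀ zero_le hcs 2
    _ = (∫⁻ a, (f a ^ (1/2:ℝ)) ^ (2:ℝ) ∂μ) * ∫⁻ a, (f a ^ (1/2:ℝ) * g a) ^ (2:ℝ) ∂μ := by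
        rw [mul_pow, hh2', hh2']
    _ = (∫⁻ a, f a ∂μ) * ∫⁻ a, f a * g a ^ 2 ∂μ := by
        congr 1
        · exact lintegral_congr fun a => hh2 _
        · refine lintegral_congr fun a => ?_
          rw [ENNReal.mul_rpow_of_nonneg _ _ (by norm_num : (0:ℝ) ≤ 2), hh2, hg2]
lemma lintegral_weight_heatKernel_le {lam t τ : ℝ} (hlam : 0 < lam) (hτt : τ ≤ t) (y : ℝ) :
    ∫⁻ x, ENNReal.ofReal (Real.exp (-2 * lam * |x|) * heatKernel τ x y) ≤
      ENNReal.ofReal (2 * Real.exp (2 * lam ^ 2 * t) * Real.exp (-2 * lam * |y|)) := by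
  rcases le_or_gt τ 0 with h | h
  · simp [heatKernel_of_nonpos h]
  · have hKx : Measurable fun x : ℝ => heatKernel τ x y := by
      change Measurable ((fun p : ℝ × ℝ × ℝ => heatKernel p.1 p.2.1 p.2.2) ∘ fun x => (τ, x, y))
      exact measurable_heatKernel.comp (by fun_prop)
    have hpt : ∀ x, Real.exp (-2 * lam * |x|) * heatKernel τ x y ≤
        heatKernel τ x y * Real.exp ((2 * lam) * (x - y)) * Real.exp (-2 * lam * |y|) +
        heatKernel τ x y * Real.exp ((-(2 * lam)) * (x - y)) * Real.exp (-2 * lam * |y|) := by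
      intro x
      have hp := heatKernel_nonneg τ x y
      have h1 : Real.exp (-2 * lam * |x|) ≤
          Real.exp (2 * lam * |x - y|) * Real.exp (-2 * lam * |y|) := by
        rw [← Real.exp_add]
        apply Real.exp_le_exp.2
        have habs : |y| - |x| ≤ |x - y| := by
          have := abs_sub_abs_le_abs_sub y x
          rwa [abs_sub_comm y x] at this
        nlinarith
      have h2 : Real.exp (2 * lam * |x - y|) ≤
          Real.exp ((2 * lam) * (x - y)) + Real.exp ((-(2 * lam)) * (x - y)) := by
        rcases abs_cases (x - y) with ⟨he, _⟩ | ⟨he, _⟩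
        · rw [he]
          exact le_add_of_nonneg_right (Real.exp_pos _).le
        · rw [he]
          rw [show 2 * lam * -(x - y) = -(2 * lam) * (x - y) by ring]
          exact le_add_of_nonneg_left (Real.exp_pos _).le
      calc Real.exp (-2 * lam * |x|) * heatKernel τ x y
          ≤ (Real.exp (2 * lam * |x - y|) * Real.exp (-2 * lam * |y|)) * heatKernel τ x y :=
            mul_le_mul_of_nonneg_right h1 hp
        _ ≤ ((Real.exp ((2*lam)*(x-y)) + Real.exp ((-(2*lam))*(x-y))) * Real.exp (-2*lam*|y|)) *
              heatKernel τ x y := by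
            have := mul_le_mul_of_nonneg_right
              (mul_le_mul_of_nonneg_right h2 (Real.exp_pos (-2*lam*|y|)).le) hp
            exact this
        _ = _ := by ring
    have hterm : ∀ c' : ℝ, ∫⁻ x, ENNReal.ofReal
          (heatKernel τ x y * Real.exp (c' * (x - y)) * Real.exp (-2 * lam * |y|)) =
        ENNReal.ofReal (Real.exp (c' ^ 2 * τ / 2)) * ENNReal.ofReal (Real.exp (-2*lam*|y|)) := by
      intro c'
      have hmeas : Measurable fun x => ENNReal.ofReal (heatKernel τ x y * Real.exp (c' * (x - y))) :=
        (hKx.mul (((measurable_id.sub_const y).const_mul c').exp)).ennreal_ofReal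
      simp_rw [ENNReal.ofReal_mul (mul_nonneg (heatKernel_nonneg _ _ _) (Real.exp_pos _).le)]
      rw [lintegral_mul_const _ hmeas, lintegral_heatKernel_mul_exp h c' y]
    have hm1 : Measurable fun x => ENNReal.ofReal
        (heatKernel τ x y * Real.exp ((2*lam) * (x - y)) * Real.exp (-2 * lam * |y|)) :=
      ((hKx.mul (((measurable_id.sub_const y).const_mul _).exp)).mul_const _).ennreal_ofReal
    calc ∫⁻ x, ENNReal.ofReal (Real.exp (-2 * lam * |x|) * heatKernel τ x y)
        ≤ ∫⁻ x, (ENNReal.ofReal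
              (heatKernel τ x y * Real.exp ((2*lam) * (x - y)) * Real.exp (-2 * lam * |y|)) +
            ENNReal.ofReal
              (heatKernel τ x y * Real.exp ((-(2*lam)) * (x - y)) * Real.exp (-2 * lam * |y|))) := by
          refine lintegral_mono fun x => ?_
          rw [← ENNReal.ofReal_add
            (mul_nonneg (mul_nonneg (heatKernel_nonneg _ _ _) (Real.exp_pos _).le)
              (Real.exp_pos _).le)
            (mul_nonneg (mul_nonneg (heatKernel_nonneg _ _ _) (Real.exp_pos _).le)
              (Real.exp_pos _).le)]
          exact ENNReal.ofReal_le_ofReal (hpt x)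
      _ = ENNReal.ofReal (Real.exp ((2*lam) ^ 2 * τ / 2)) * ENNReal.ofReal (Real.exp (-2*lam*|y|)) +
          ENNReal.ofReal (Real.exp ((-(2*lam)) ^ 2 * τ / 2)) * ENNReal.ofReal (Real.exp (-2*lam*|y|)) := by
          rw [lintegral_add_left hm1, hterm (2*lam), hterm (-(2*lam))]
      _ ≤ ENNReal.ofReal (2 * Real.exp (2 * lam ^ 2 * t) * Real.exp (-2 * lam * |y|)) := by
          rw [← ENNReal.ofReal_mul (Real.exp_pos _).le, ← ENNReal.ofReal_mul (Real.exp_pos _).le,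
            ← ENNReal.ofReal_add (by positivity) (by positivity)]
          apply ENNReal.ofReal_le_ofReal
          have hE : Real.exp ((2*lam) ^ 2 * τ / 2) ≤ Real.exp (2 * lam ^ 2 * t) := by
            apply Real.exp_le_exp.2
            nlinarith [sq_nonneg lam]
          have hw := (Real.exp_pos (-2*lam*|y|)).le
          have : (-(2*lam)) ^ 2 = (2*lam) ^ 2 := by ring
          rw [this]
          nlinarith

theorem heat_convolution_weightedL2_bound (lam t : ℝ) (hlam : 0 < lam) (ht : 0 < t)
    (g : ℝ → ℝ → ℝ) (hg : Measurable (Function.uncurry g)) :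
    (∫⁻ x : ℝ, ENNReal.ofReal
        ((∫ s in Set.Ioc (0 : ℝ) t, ∫ y : ℝ, heatKernel (t - s) x y * g s y) ^ 2 *
          Real.exp (-2 * lam * |x|))) ≤
      ENNReal.ofReal (2 * t * Real.exp (2 * lam ^ 2 * t)) *
        ∫⁻ s in Set.Ioc (0 : ℝ) t, ∫⁻ y : ℝ,
          ENNReal.ofReal (g s y ^ 2 * Real.exp (-2 * lam * |y|)) := by
  have hKm : Measurable fun p : ℝ × ℝ × ℝ => ENNReal.ofReal (heatKernel (t - p.2.1) p.1 p.2.2) := by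
    apply Measurable.ennreal_ofReal
    change Measurable ((fun p : ℝ × ℝ × ℝ => heatKernel p.1 p.2.1 p.2.2) ∘
      fun p : ℝ × ℝ × ℝ => (t - p.2.1, p.1, p.2.2))
    exact measurable_heatKernel.comp (by fun_prop)
  set S : Set ℝ := Set.Ioc (0 : ℝ) t with hS
  set μ : Measure (ℝ × ℝ) := (volume.restrict S).prod volume with hμ
  have hPx : ∀ x : ℝ, Measurable fun q : ℝ × ℝ => ENNReal.ofReal (heatKernel (t - q.1) x q.2) := by
    intro x
    change Measurable ((fun p : ℝ × ℝ × ℝ => ENNReal.ofReal (heatKernel (t - p.2.1) p.1 p.2.2)) ∘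
      fun q : ℝ × ℝ => (x, q))
    exact hKm.comp (by fun_prop)
  have hGm : Measurable fun q : ℝ × ℝ => ENNReal.ofReal |g q.1 q.2| := hg.abs.ennreal_ofReal
  have hWm : Measurable fun x : ℝ => ENNReal.ofReal (Real.exp (-2 * lam * |x|)) :=
    (Real.measurable_exp.comp (measurable_abs.const_mul _)).ennreal_ofReal
  -- Step 1: pointwise bound on the square of the Bochner integral
  have step1 : ∀ x : ℝ,
      ENNReal.ofReal ((∫ s in S, ∫ y : ℝ, heatKernel (t - s) x y * g s y) ^ 2) ≤
      (∫⁻ q : ℝ × ℝ, ENNReal.ofReal (heatKernel (t - q.1) x q.2) * ENNReal.ofReal |g q.1 q.2| ∂μ) ^ 2 := by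
    intro x
    have e1 : ENNReal.ofReal ((∫ s in S, ∫ y : ℝ, heatKernel (t - s) x y * g s y) ^ 2)
        = (‖∫ s in S, ∫ y : ℝ, heatKernel (t - s) x y * g s y‖₊ : ℝ≥0∞) ^ 2 := by
      rw [← enorm_eq_nnnorm, Real.enorm_eq_ofReal_abs, ← ENNReal.ofReal_pow (abs_nonneg _), sq_abs]
    rw [e1]
    have e2 : (‖∫ s in S, ∫ y : ℝ, heatKernel (t - s) x y * g s y‖₊ : ℝ≥0∞)
        ≤ ∫⁻ s in S, ∫⁻ y : ℝ,
            ENNReal.ofReal (heatKernel (t - s) x y) * ENNReal.ofReal |g s y| := by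
      refine (enorm_integral_le_lintegral_enorm _).trans ?_
      refine lintegral_mono fun s => ?_
      refine (enorm_integral_le_lintegral_enorm _).trans ?_
      refine le_of_eq (lintegral_congr fun y => ?_)
      rw [Real.enorm_eq_ofReal_abs, abs_mul,
        ENNReal.ofReal_mul (abs_nonneg _), abs_of_nonneg (heatKernel_nonneg _ _ _)]
    have e3 : (∫⁻ s in S, ∫⁻ y : ℝ,
          ENNReal.ofReal (heatKernel (t - s) x y) * ENNReal.ofReal |g s y|)
        = ∫⁻ q : ℝ × ℝ, ENNReal.ofReal (heatKernel (t - q.1) x q.2) * ENNReal.ofReal |g q.1 q.2| ∂μ := by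
      rw [hμ]
      exact lintegral_lintegral (((hPx x).mul hGm).aemeasurable)
    exact pow_le_pow_left₀ zero_le (e2.trans e3.le) 2
  -- Step 3: total mass bound
  have step3 : ∀ x : ℝ,
      (∫⁻ q : ℝ × ℝ, ENNReal.ofReal (heatKernel (t - q.1) x q.2) ∂μ) ≤ ENNReal.ofReal t := by
    intro x
    have e : (∫⁻ s in S, ∫⁻ y : ℝ, ENNReal.ofReal (heatKernel (t - s) x y))
        = ∫⁻ q : ℝ × ℝ, ENNReal.ofReal (heatKernel (t - q.1) x q.2) ∂μ := by
      rw [hμ]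
      exact lintegral_lintegral (hPx x).aemeasurable
    rw [← e]
    calc (∫⁻ s in S, ∫⁻ y : ℝ, ENNReal.ofReal (heatKernel (t - s) x y))
        ≤ ∫⁻ _ in S, 1 := lintegral_mono fun s => lintegral_heatKernel_snd_le_one _ _
      _ = ENNReal.ofReal t := by
          simp [hS, Real.volume_Ioc, ht.le]
  -- Step 2: Cauchy–Schwarz
  have step2 : ∀ x : ℝ,
      (∫⁻ q : ℝ × ℝ, ENNReal.ofReal (heatKernel (t - q.1) x q.2) * ENNReal.ofReal |g q.1 q.2| ∂μ) ^ 2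
      ≤ ENNReal.ofReal t *
        ∫⁻ q : ℝ × ℝ, ENNReal.ofReal (heatKernel (t - q.1) x q.2) * ENNReal.ofReal |g q.1 q.2| ^ 2 ∂μ := by
    intro x
    refine (lintegral_cauchy_schwarz μ (hPx x).aemeasurable hGm.aemeasurable).trans ?_
    exact mul_le_mul_left (step3 x) _
  -- measurability of the big integrand
  have hBm : Measurable fun x : ℝ => ∫⁻ q : ℝ × ℝ,
      ENNReal.ofReal (heatKernel (t - q.1) x q.2) * ENNReal.ofReal |g q.1 q.2| ^ 2 ∂μ :=
    Measurable.lintegral_prod_right' (hKm.mul ((hGm.comp measurable_snd).pow_const 2))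
  have hFm : Measurable fun p : ℝ × (ℝ × ℝ) =>
      (ENNReal.ofReal (heatKernel (t - p.2.1) p.1 p.2.2) * ENNReal.ofReal |g p.2.1 p.2.2| ^ 2) *
        ENNReal.ofReal (Real.exp (-2 * lam * |p.1|)) :=
    (hKm.mul ((hGm.comp measurable_snd).pow_const 2)).mul (hWm.comp measurable_fst)
  -- a.e. the first coordinate lies in S
  have hae : ∀ᵐ q : ℝ × ℝ ∂μ, q.1 ∈ S := by
    rw [ae_iff]
    have hset : {q : ℝ × ℝ | ¬ q.1 ∈ S} = Sᶜ ×ˢ (Set.univ : Set ℝ) := by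
      ext q; simp
    rw [hμ, hset, Measure.prod_prod, Measure.restrict_apply measurableSet_Ioc.compl]
    simp [hS, Set.compl_inter_self]
  -- inner integral bound
  have hinner : ∀ s ∈ S, ∀ y : ℝ,
      (∫⁻ x : ℝ, (ENNReal.ofReal (heatKernel (t - s) x y) * ENNReal.ofReal |g s y| ^ 2) *
        ENNReal.ofReal (Real.exp (-2 * lam * |x|)))
      ≤ ENNReal.ofReal |g s y| ^ 2 *
        ENNReal.ofReal (2 * Real.exp (2 * lam ^ 2 * t) * Real.exp (-2 * lam * |y|)) := by
    intro s hs y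
    have hE : t - s ≤ t := by linarith [hs.1]
    have hmx : Measurable fun x : ℝ =>
        ENNReal.ofReal (Real.exp (-2 * lam * |x|) * heatKernel (t - s) x y) :=
      ((Real.measurable_exp.comp (measurable_abs.const_mul _)).mul
        (measurable_heatKernel_x _ y)).ennreal_ofReal
    calc (∫⁻ x : ℝ, (ENNReal.ofReal (heatKernel (t - s) x y) * ENNReal.ofReal |g s y| ^ 2) *
            ENNReal.ofReal (Real.exp (-2 * lam * |x|)))
        = ∫⁻ x : ℝ, ENNReal.ofReal |g s y| ^ 2 *
            ENNReal.ofReal (Real.exp (-2 * lam * |x|) * heatKernel (t - s) x y) := by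
          refine lintegral_congr fun x => ?_
          rw [ENNReal.ofReal_mul (Real.exp_pos _).le]
          ring
      _ = ENNReal.ofReal |g s y| ^ 2 *
            ∫⁻ x : ℝ, ENNReal.ofReal (Real.exp (-2 * lam * |x|) * heatKernel (t - s) x y) :=
          lintegral_const_mul _ hmx
      _ ≤ _ := mul_le_mul_right (lintegral_weight_heatKernel_le hlam hE y) _
  calc (∫⁻ x : ℝ, ENNReal.ofReal
        ((∫ s in S, ∫ y : ℝ, heatKernel (t - s) x y * g s y) ^ 2 *
          Real.exp (-2 * lam * |x|)))
      ≤ ∫⁻ x : ℝ, ENNReal.ofReal t *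
          ((∫⁻ q : ℝ × ℝ, ENNReal.ofReal (heatKernel (t - q.1) x q.2) *
            ENNReal.ofReal |g q.1 q.2| ^ 2 ∂μ) *
            ENNReal.ofReal (Real.exp (-2 * lam * |x|))) := by
        refine lintegral_mono fun x => ?_
        rw [ENNReal.ofReal_mul (sq_nonneg _)]
        calc ENNReal.ofReal ((∫ s in S, ∫ y : ℝ, heatKernel (t - s) x y * g s y) ^ 2) *
              ENNReal.ofReal (Real.exp (-2 * lam * |x|))
            ≤ (∫⁻ q : ℝ × ℝ, ENNReal.ofReal (heatKernel (t - q.1) x q.2) *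
                ENNReal.ofReal |g q.1 q.2| ∂μ) ^ 2 *
              ENNReal.ofReal (Real.exp (-2 * lam * |x|)) := mul_le_mul_left (step1 x) _
          _ ≤ (ENNReal.ofReal t *
                ∫⁻ q : ℝ × ℝ, ENNReal.ofReal (heatKernel (t - q.1) x q.2) *
                  ENNReal.ofReal |g q.1 q.2| ^ 2 ∂μ) *
              ENNReal.ofReal (Real.exp (-2 * lam * |x|)) := mul_le_mul_left (step2 x) _
          _ = _ := mul_assoc _ _ _
    _ = ENNReal.ofReal t * ∫⁻ x : ℝ,
          (∫⁻ q : ℝ × ℝ, ENNReal.ofReal (heatKernel (t - q.1) x q.2) *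
            ENNReal.ofReal |g q.1 q.2| ^ 2 ∂μ) *
            ENNReal.ofReal (Real.exp (-2 * lam * |x|)) :=
        lintegral_const_mul _ (hBm.mul hWm)
    _ = ENNReal.ofReal t * ∫⁻ x : ℝ, ∫⁻ q : ℝ × ℝ,
          (ENNReal.ofReal (heatKernel (t - q.1) x q.2) * ENNReal.ofReal |g q.1 q.2| ^ 2) *
            ENNReal.ofReal (Real.exp (-2 * lam * |x|)) ∂μ := by
        congr 1
        refine lintegral_congr fun x => ?_
        exact (lintegral_mul_const _ ((hPx x).mul (hGm.pow_const 2))).symm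
    _ = ENNReal.ofReal t * ∫⁻ q : ℝ × ℝ, (∫⁻ x : ℝ,
          (ENNReal.ofReal (heatKernel (t - q.1) x q.2) * ENNReal.ofReal |g q.1 q.2| ^ 2) *
            ENNReal.ofReal (Real.exp (-2 * lam * |x|))) ∂μ := by
        congr 1
        have h : AEMeasurable (Function.uncurry fun (x : ℝ) (q : ℝ × ℝ) =>
            (ENNReal.ofReal (heatKernel (t - q.1) x q.2) * ENNReal.ofReal |g q.1 q.2| ^ 2) *
              ENNReal.ofReal (Real.exp (-2 * lam * |x|)))
            ((volume : Measure ℝ).prod μ) := hFm.aemeasurable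
        exact lintegral_lintegral_swap h
    _ ≤ ENNReal.ofReal t * ∫⁻ q : ℝ × ℝ, ENNReal.ofReal |g q.1 q.2| ^ 2 *
          ENNReal.ofReal (2 * Real.exp (2 * lam ^ 2 * t) * Real.exp (-2 * lam * |q.2|)) ∂μ := by
        refine mul_le_mul_right (lintegral_mono_ae ?_) _
        filter_upwards [hae] with q hq
        exact hinner q.1 hq q.2
    _ = ENNReal.ofReal t * (ENNReal.ofReal (2 * Real.exp (2 * lam ^ 2 * t)) *
          ∫⁻ q : ℝ × ℝ, ENNReal.ofReal (g q.1 q.2 ^ 2 * Real.exp (-2 * lam * |q.2|)) ∂μ) := by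
        congr 1
        have hgm2 : Measurable fun q : ℝ × ℝ =>
            ENNReal.ofReal (g q.1 q.2 ^ 2 * Real.exp (-2 * lam * |q.2|)) :=
          ((hg.pow_const 2).mul
            (Real.measurable_exp.comp ((measurable_abs.comp measurable_snd).const_mul
              (-2 * lam)))).ennreal_ofReal
        rw [← lintegral_const_mul _ hgm2]
        refine lintegral_congr fun q => ?_
        rw [ENNReal.ofReal_mul (by positivity : (0:ℝ) ≤ 2 * Real.exp (2 * lam ^ 2 * t)),
          ENNReal.ofReal_mul (sq_nonneg _), ← ENNReal.ofReal_pow (abs_nonneg _), sq_abs]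
        ring
    _ = ENNReal.ofReal (2 * t * Real.exp (2 * lam ^ 2 * t)) *
          ∫⁻ s in S, ∫⁻ y : ℝ, ENNReal.ofReal (g s y ^ 2 * Real.exp (-2 * lam * |y|)) := by
        rw [← mul_assoc, ← ENNReal.ofReal_mul ht.le]
        congr 1
        · congr 1
          ring
        · have hgm2 : Measurable fun q : ℝ × ℝ =>
              ENNReal.ofReal (g q.1 q.2 ^ 2 * Real.exp (-2 * lam * |q.2|)) :=
            ((hg.pow_const 2).mul
              (Real.measurable_exp.comp ((measurable_abs.comp measurable_snd).const_mul
                (-2 * lam)))).ennreal_ofReal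
          have h : AEMeasurable (Function.uncurry fun (s y : ℝ) =>
              ENNReal.ofReal (g s y ^ 2 * Real.exp (-2 * lam * |y|)))
              ((volume.restrict S).prod volume) := hgm2.aemeasurable
          rw [hμ]
          exact (lintegral_lintegral h).symm
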